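/- Let m ≥ 3 be an integer and let a, b : ZMod m → ℝ³ satisfy Σ_{l} a(l) = 0, Σ_{l} b(l) = 0, and ‖a(x_1) + b(x_2)‖ ≤ 1 for all x_1, x_2 ∈ ZMod m; define ρ_{x_1 x_2} = (1/2)(I + (a(x_1)+b(x_2))·σ). For y ∈ {1,2}, let m̂_y ∈ ℝ³ be a unit vector and set M_{0|y} = (1/2)(I + m̂_y·σ), M_{1|y} = (1/2)(I − m̂_y·σ), and M_{b|y} = 0 for b ∉ {0,1}. Then the (2,m) POREC success probability of this strategy equals (m−1)/m − (1/(4m))·[ m̂_1·(a(0) − a(1)) + m̂_2·(b(0) − b(1)) ]. -/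

import Mathlib

open Finset

noncomputable section

/-- Pauli matrix `σ_x`. -/
def sigmaX : Matrix (Fin 2) (Fin 2) ℂ := !![0, 1; 1, 0]

/-- Pauli matrix `σ_y`. -/
def sigmaY : Matrix (Fin 2) (Fin 2) ℂ := !![0, -Complex.I; Complex.I, 0]

/-- Pauli matrix `σ_z`. -/
def sigmaZ : Matrix (Fin 2) (Fin 2) ℂ := !![1, 0; 0, -1]

/-- `v·σ = v₁σ_x + v₂σ_y + v₃σ_z` for `v ∈ ℝ³`. -/
def dotSigma (v : EuclideanSpace ℝ (Fin 3)) : Matrix (Fin 2) (Fin 2) ℂ :=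
  v 0 • sigmaX + v 1 • sigmaY + v 2 • sigmaZ

/-- The qubit state with Bloch vector `v`: `(I + v·σ)/2`. -/
def blochState (v : EuclideanSpace ℝ (Fin 3)) : Matrix (Fin 2) (Fin 2) ℂ :=
  (1 / 2 : ℝ) • ((1 : Matrix (Fin 2) (Fin 2) ℂ) + dotSigma v)

/-- The two-outcome projective measurement along `m̂`: `M₀ = (I + m̂·σ)/2`,
`M₁ = (I − m̂·σ)/2`, and `M_b = 0` for `b ∉ {0,1}`. -/
def projMeas (m : ℕ) [NeZero m] (mhat : EuclideanSpace ℝ (Fin 3)) (b : ZMod m) :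
    Matrix (Fin 2) (Fin 2) ℂ :=
  if b = 0 then (1 / 2 : ℝ) • ((1 : Matrix (Fin 2) (Fin 2) ℂ) + dotSigma mhat)
  else if b = 1 then (1 / 2 : ℝ) • ((1 : Matrix (Fin 2) (Fin 2) ℂ) - dotSigma mhat)
  else 0

/-!
The two nonzero effects are themselves Bloch operators, `M₀ = ρ_{m̂}` and `M₁ = ρ_{-m̂}`, so
`M₀ + M₁ = I` and the sum over wrong guesses `b ≠ x_y` is `1 - Tr(ρ_x M_{x_y|y})`. Since
`ρ_v` is affine in `v`, the zero-sum condition on `b` averages `ρ_{a(x₁)+b(x₂)}` over `x₂` to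
`ρ_{a(x₁)}`, and `Tr(ρ_v ρ_w) = (1 + v·w)/2` leaves only `x₁ ∈ {0, 1}`, giving
`∑ₓ Tr(ρ_x M_{x₁|1}) = m (1 + m̂₁·(a(0) - a(1))/2)`; symmetrically for the second measurement.
-/

lemma dotSigma_add (v w : EuclideanSpace ℝ (Fin 3)) :
    dotSigma (v + w) = dotSigma v + dotSigma w := by
  simp only [dotSigma, PiLp.add_apply, add_smul]
  abel

lemma dotSigma_zero : dotSigma 0 = 0 := by
  simp [dotSigma]

lemma dotSigma_neg (v : EuclideanSpace ℝ (Fin 3)) : dotSigma (-v) = -dotSigma v := by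
  simp only [dotSigma, PiLp.neg_apply, neg_smul]
  abel

lemma trace_dotSigma (v : EuclideanSpace ℝ (Fin 3)) : (dotSigma v).trace = 0 := by
  simp [dotSigma, sigmaX, sigmaY, sigmaZ, Matrix.trace_fin_two]

lemma trace_dotSigma_mul_dotSigma (v w : EuclideanSpace ℝ (Fin 3)) :
    (dotSigma v * dotSigma w).trace = 2 * (inner ℝ v w : ℝ) := by
  simp [dotSigma, sigmaX, sigmaY, sigmaZ, Matrix.trace_fin_two, PiLp.inner_apply,
    Fin.sum_univ_three, Complex.ext_iff]
  constructor <;> ring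

lemma blochState_add (u v : EuclideanSpace ℝ (Fin 3)) :
    blochState (u + v) = blochState u + (1 / 2 : ℝ) • dotSigma v := by
  rw [blochState, blochState, dotSigma_add, ← add_assoc, smul_add]

lemma blochState_add_blochState_neg (v : EuclideanSpace ℝ (Fin 3)) :
    blochState v + blochState (-v) = 1 := by
  rw [blochState, blochState, dotSigma_neg, ← smul_add, add_add_add_comm, add_neg_cancel,
    add_zero, ← two_smul ℝ, smul_smul]
  norm_num

lemma trace_blochState (v : EuclideanSpace ℝ (Fin 3)) : (blochState v).trace = 1 := by
  simp [blochState, Matrix.trace_add, trace_dotSigma]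

lemma re_trace_blochState_mul_blochState (v w : EuclideanSpace ℝ (Fin 3)) :
    (blochState v * blochState w).trace.re = (1 + inner ℝ v w) / 2 := by
  simp [blochState, add_mul, mul_add, Matrix.trace_add,
    trace_dotSigma, trace_dotSigma_mul_dotSigma]
  ring

lemma sum_blochState_add {ι : Type*} [Fintype ι] (u : EuclideanSpace ℝ (Fin 3))
    {g : ι → EuclideanSpace ℝ (Fin 3)} (hg : ∑ i, g i = 0) :
    ∑ i, blochState (u + g i) = Fintype.card ι • blochState u := by
  have hsum : ∑ i, dotSigma (g i) = 0 := by
    simpa [hg, dotSigma_zero] using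
      (map_sum (AddMonoidHom.mk' dotSigma dotSigma_add) g univ).symm
  simp only [blochState_add, sum_add_distrib, ← smul_sum, hsum, smul_zero, add_zero, sum_const,
    card_univ]

section Measurement

variable {m : ℕ} [NeZero m]

lemma projMeas_zero (w : EuclideanSpace ℝ (Fin 3)) : projMeas m w 0 = blochState w := by
  rw [projMeas, if_pos rfl, blochState]

lemma projMeas_one (hm : 1 < m) (w : EuclideanSpace ℝ (Fin 3)) :
    projMeas m w 1 = blochState (-w) := by
  have : Fact (1 < m) := ⟨hm⟩
  rw [projMeas, if_neg one_ne_zero, if_pos rfl, blochState, dotSigma_neg, sub_eq_add_neg]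

lemma projMeas_of_ne {c : ZMod m} (h0 : c ≠ 0) (h1 : c ≠ 1) (w : EuclideanSpace ℝ (Fin 3)) :
    projMeas m w c = 0 := by
  rw [projMeas, if_neg h0, if_neg h1]

lemma sum_projMeas (hm : 1 < m) (w : EuclideanSpace ℝ (Fin 3)) : ∑ c, projMeas m w c = 1 := by
  have : Fact (1 < m) := ⟨hm⟩
  rw [Fintype.sum_eq_add 0 1 zero_ne_one fun c hc => projMeas_of_ne hc.1 hc.2 w,
    projMeas_zero, projMeas_one hm, blochState_add_blochState_neg]

lemma sum_re_trace_blochState_mul_projMeas (hm : 1 < m) (v w : EuclideanSpace ℝ (Fin 3)) :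
    ∑ c, (blochState v * projMeas m w c).trace.re = 1 := by
  rw [← Complex.re_sum, ← Matrix.trace_sum, ← mul_sum, sum_projMeas hm, mul_one,
    trace_blochState, Complex.one_re]

lemma sum_filter_ne_re_trace_blochState_mul_projMeas (hm : 1 < m)
    (v w : EuclideanSpace ℝ (Fin 3)) (x : ZMod m) :
    ∑ c ∈ univ.filter (fun c => c ≠ x), (blochState v * projMeas m w c).trace.re =
      1 - (blochState v * projMeas m w x).trace.re := by
  rw [filter_ne', sum_erase_eq_sub (mem_univ x), sum_re_trace_blochState_mul_projMeas hm]

lemma sum_re_trace_blochState_mul_projMeas_self (hm : 1 < m)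
    (f : ZMod m → EuclideanSpace ℝ (Fin 3)) (w : EuclideanSpace ℝ (Fin 3)) :
    ∑ c, (blochState (f c) * projMeas m w c).trace.re = 1 + inner ℝ w (f 0 - f 1) / 2 := by
  have : Fact (1 < m) := ⟨hm⟩
  rw [Fintype.sum_eq_add 0 1 zero_ne_one fun c hc => by simp [projMeas_of_ne hc.1 hc.2],
    projMeas_zero, projMeas_one hm, re_trace_blochState_mul_blochState,
    re_trace_blochState_mul_blochState, inner_neg_right, inner_sub_right,
    real_inner_comm w, real_inner_comm w]
  ring

lemma sum_sum_re_trace_blochState_add_mul_projMeas (hm : 1 < m)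
    (f g : ZMod m → EuclideanSpace ℝ (Fin 3)) (hg : ∑ l, g l = 0)
    (w : EuclideanSpace ℝ (Fin 3)) :
    ∑ i, ∑ j, (blochState (f i + g j) * projMeas m w i).trace.re =
      m * (1 + inner ℝ w (f 0 - f 1) / 2) := by
  have hrow (i : ZMod m) : ∑ j, (blochState (f i + g j) * projMeas m w i).trace.re =
      m * (blochState (f i) * projMeas m w i).trace.re := by
    rw [← Complex.re_sum, ← Matrix.trace_sum, ← sum_mul, sum_blochState_add _ hg, ZMod.card,
      smul_mul_assoc, Matrix.trace_smul, Complex.re_nsmul, nsmul_eq_mul]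
  rw [sum_congr rfl fun i _ => hrow i, ← mul_sum, sum_re_trace_blochState_mul_projMeas_self hm]

end Measurement

theorem porec2m_success_eq_projective_general
    (m : ℕ) (hm : 3 ≤ m) [NeZero m]
    (a b : ZMod m → EuclideanSpace ℝ (Fin 3))
    (ha_sum : ∑ l : ZMod m, a l = 0) (hb_sum : ∑ l : ZMod m, b l = 0)
    (mhat₁ mhat₂ : EuclideanSpace ℝ (Fin 3)) :
    (1 / (2 * (m : ℝ) ^ 2)) *
        ∑ x : ZMod m × ZMod m,
          ((∑ c ∈ Finset.univ.filter (fun c => c ≠ x.1),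
              ((blochState (a x.1 + b x.2) * projMeas m mhat₁ c).trace.re)) +
           (∑ c ∈ Finset.univ.filter (fun c => c ≠ x.2),
              ((blochState (a x.1 + b x.2) * projMeas m mhat₂ c).trace.re)))
      = ((m : ℝ) - 1) / m -
        (1 / (4 * (m : ℝ))) *
          ((inner ℝ mhat₁ (a 0 - a 1) : ℝ) + (inner ℝ mhat₂ (b 0 - b 1) : ℝ)) := by
  have hm₁ : 1 < m := by omega
  have hsum₁ : ∑ x : ZMod m × ZMod m,
      (blochState (a x.1 + b x.2) * projMeas m mhat₁ x.1).trace.re = m * (1 + inner ℝ mhat₁ (a 0 - a 1) / 2) := by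
    rw [Fintype.sum_prod_type]
    exact sum_sum_re_trace_blochState_add_mul_projMeas hm₁ a b hb_sum mhat₁
  have hsum₂ : ∑ x : ZMod m × ZMod m,
      (blochState (a x.1 + b x.2) * projMeas m mhat₂ x.2).trace.re = m * (1 + inner ℝ mhat₂ (b 0 - b 1) / 2) := by
    simp only [Fintype.sum_prod_type_right, add_comm (a _)]
    exact sum_sum_re_trace_blochState_add_mul_projMeas hm₁ b a ha_sum mhat₂
  simp only [sum_filter_ne_re_trace_blochState_mul_projMeas hm₁, sum_add_distrib, sum_sub_distrib,
    hsum₁, hsum₂, sum_const, card_univ, Fintype.card_prod, ZMod.card, nsmul_eq_mul, Nat.cast_mul]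
  have hm₀ : (m : ℝ) ≠ 0 := Nat.cast_ne_zero.mpr (NeZero.ne m)
  field_simp
  ring

/-- **Reduction of the (2,m) POREC success probability for projective measurements.**
For additive zero-sum Bloch preparations `ρ_{x₁x₂} = (I + (a(x₁)+b(x₂))·σ)/2` within the
Bloch ball and two-outcome projective measurements along unit vectors `m̂₁, m̂₂`, the POREC
success probability equals
`(m−1)/m − (1/(4m))·[m̂₁·(a(0)−a(1)) + m̂₂·(b(0)−b(1))]`. -/
theorem porec2m_success_eq_projective
    (m : ℕ) (hm : 3 ≤ m) [NeZero m]
    (a b : ZMod m → EuclideanSpace ℝ (Fin 3))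
    (ha_sum : ∑ l : ZMod m, a l = 0) (hb_sum : ∑ l : ZMod m, b l = 0)
    (hball : ∀ x₁ x₂ : ZMod m, ‖a x₁ + b x₂‖ ≤ 1)
    (mhat₁ mhat₂ : EuclideanSpace ℝ (Fin 3))
    (hm₁_unit : ‖mhat₁‖ = 1) (hm₂_unit : ‖mhat₂‖ = 1) :
    (1 / (2 * (m : ℝ) ^ 2)) *
        ∑ x : ZMod m × ZMod m,
          ((∑ c ∈ Finset.univ.filter (fun c => c ≠ x.1),
              ((blochState (a x.1 + b x.2) * projMeas m mhat₁ c).trace.re)) +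
           (∑ c ∈ Finset.univ.filter (fun c => c ≠ x.2),
              ((blochState (a x.1 + b x.2) * projMeas m mhat₂ c).trace.re)))
      = ((m : ℝ) - 1) / m -
        (1 / (4 * (m : ℝ))) *
          ((inner ℝ mhat₁ (a 0 - a 1) : ℝ) + (inner ℝ mhat₂ (b 0 - b 1) : ℝ)) :=
  porec2m_success_eq_projective_general m hm a b ha_sum hb_sum mhat₁ mhat₂
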